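/- For any two stochastic policies π and π' of a discounted MDP with γ ∈ [0,1) and any probability distribution μ on states, μ·(v_{π'} - v_π) = (1-γ)^{-1} d_{μ,π'}·(T_{π'}v_π - v_π) ≤ (1-γ)^{-1} d_{μ,π'}·(T v_π - v_π), where T is the optimal Bellman operator. -/

import Mathlib

open Matrix Filter Topology

section MDPdefs

variable {S A : Type*}

/-- `P` is a transition kernel: nonnegative and each row sums to one. -/
def IsKernel [Fintype S] (P : S → A → S → ℝ) : Prop :=
  ∀ s a, (∀ s', 0 ≤ P s a s') ∧ ∑ s', P s a s' = 1

/-- A stochastic policy: a probability distribution over actions in each state. -/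
def IsPolicy [Fintype A] (π : S → A → ℝ) : Prop :=
  ∀ s, (∀ a, 0 ≤ π s a) ∧ ∑ a, π s a = 1

/-- A probability distribution over states. -/
def IsDist [Fintype S] (μ : S → ℝ) : Prop :=
  (∀ s, 0 ≤ μ s) ∧ ∑ s, μ s = 1

/-- The reward vector `r_π(s) = ∑_a π(a|s) r(s,a)`. -/
def rPol [Fintype A] (r : S → A → ℝ) (π : S → A → ℝ) : S → ℝ :=
  fun s => ∑ a, π s a * r s a

/-- The stochastic matrix `P_π(s,s') = ∑_a π(a|s) P(s'|s,a)`. -/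
def PPol [Fintype A] (P : S → A → S → ℝ) (π : S → A → ℝ) : Matrix S S ℝ :=
  Matrix.of fun s s' => ∑ a, π s a * P s a s'

/-- The Bellman operator `T_π v = r_π + γ P_π v`. -/
noncomputable def bellman [Fintype S] [Fintype A] (P : S → A → S → ℝ) (r : S → A → ℝ)
    (γ : ℝ) (π : S → A → ℝ) (v : S → ℝ) : S → ℝ :=
  rPol r π + γ • (PPol P π *ᵥ v)

/-- The optimal Bellman operator `(Tv)(s) = max_a [r(s,a) + γ ∑_{s'} P(s'|s,a) v(s')]`. -/
noncomputable def optBellman [Fintype S] [Fintype A] [Nonempty A] (P : S → A → S → ℝ)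
    (r : S → A → ℝ) (γ : ℝ) (v : S → ℝ) : S → ℝ :=
  fun s => Finset.univ.sup' Finset.univ_nonempty fun a => r s a + γ * ∑ s', P s a s' * v s'

/-- The value function of policy `π`, `v_π = (I - γ P_π)⁻¹ r_π`, the unique solution of
`v = r_π + γ P_π v` when `0 ≤ γ < 1`. -/
noncomputable def valueFn [Fintype S] [Fintype A] [DecidableEq S] (P : S → A → S → ℝ)
    (r : S → A → ℝ) (γ : ℝ) (π : S → A → ℝ) : S → ℝ :=
  ((1 : Matrix S S ℝ) - γ • PPol P π)⁻¹ *ᵥ rPol r π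

/-- The γ-weighted occupancy measure `d_{μ,π} = (1-γ) μ (I - γ P_π)⁻¹` (a row vector). -/
noncomputable def occ [Fintype S] [Fintype A] [DecidableEq S] (P : S → A → S → ℝ)
    (γ : ℝ) (μ : S → ℝ) (π : S → A → ℝ) : S → ℝ :=
  (1 - γ) • (μ ᵥ* ((1 : Matrix S S ℝ) - γ • PPol P π)⁻¹)

/-- The stochastic mixture `(1-α)π + απ'`. -/
def mix (α : ℝ) (π π' : S → A → ℝ) : S → A → ℝ :=
  fun s a => (1 - α) * π s a + α * π' s a

/-- The `ν`-greedy-complexity `E_ν(Π) = sup_{ρ∈Π} inf_{ρ'∈Π} d_{ν,ρ}·(T v_ρ - T_{ρ'} v_ρ)`. -/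
noncomputable def greedyCplx [Fintype S] [Fintype A] [Nonempty A] [DecidableEq S]
    (P : S → A → S → ℝ) (r : S → A → ℝ) (γ : ℝ) (ν : S → ℝ)
    (Pol : Set (S → A → ℝ)) : ℝ :=
  ⨆ ρ : Pol, ⨅ ρ' : Pol,
    occ P γ ν (ρ : S → A → ℝ) ⬝ᵥ
      (optBellman P r γ (valueFn P r γ (ρ : S → A → ℝ)) -
        bellman P r γ (ρ' : S → A → ℝ) (valueFn P r γ (ρ : S → A → ℝ)))

/-- `π` is an `ε`-local optimum of `J_ν` over `Pol`: for every `π' ∈ Pol`, the (one-sided)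
limit of `(ν·v_{(1-α)π+απ'} - ν·v_π)/α` as `α → 0⁺` exists and is at most `ε`. -/
def IsLocalOpt [Fintype S] [Fintype A] [DecidableEq S]
    (P : S → A → S → ℝ) (r : S → A → ℝ) (γ : ℝ) (ν : S → ℝ)
    (Pol : Set (S → A → ℝ)) (π : S → A → ℝ) (ε : ℝ) : Prop :=
  ∀ π' ∈ Pol, ∃ L ≤ ε,
    Tendsto (fun α : ℝ =>
        (ν ⬝ᵥ valueFn P r γ (mix α π π') - ν ⬝ᵥ valueFn P r γ π) / α)
      (𝓝[>] 0) (𝓝 L)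

end MDPdefs

/-!
With `M = 1 - γ P_{π'}` we have `M v_{π'} = r_{π'}`, hence `M (v_{π'} - v) = T_{π'} v - v` for every
vector `v`; pairing `v_{π'} - v = M⁻¹ (T_{π'} v - v)` with `μ` gives the equality, because
`d_{μ,π'} = (1 - γ) μ M⁻¹`. For the inequality, `T_{π'} v ≤ T v` pointwise (an average is at most a
maximum) and `d_{μ,π'} ≥ 0`: a discrete minimum principle shows that `1 - γ P` is invertible with a
nonnegative inverse for every row-stochastic `P` and `0 ≤ γ < 1`.
-/

namespace Matrix

variable {n R : Type*} [Fintype n] [DecidableEq n] [Field R] [LinearOrder R]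
  [IsStrictOrderedRing R] {P : Matrix n n R} {γ : R}

/-- At a minimum point `m` of `x` the average `(P *ᵥ x) m` is at least `x m`, so
`0 ≤ x m - γ (P *ᵥ x) m ≤ (1 - γ) x m`. -/
theorem nonneg_of_one_sub_smul_mulVec_nonneg (hP : P ∈ rowStochastic R n) (hγ0 : 0 ≤ γ)
    (hγ1 : γ < 1) {x : n → R} (hx : 0 ≤ (1 - γ • P) *ᵥ x) : 0 ≤ x := by
  intro s
  obtain ⟨m, -, hm⟩ := Finset.exists_min_image Finset.univ x ⟨s, Finset.mem_univ s⟩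
  have hPx : x m ≤ (P *ᵥ x) m :=
    calc x m = ∑ j, P m j * x m := by
          rw [← Finset.sum_mul, sum_row_of_mem_rowStochastic hP, one_mul]
      _ ≤ ∑ j, P m j * x j := by
          gcongr with j
          exacts [hP.1 m j, hm j (Finset.mem_univ j)]
  have hxm : 0 ≤ x m - γ * (P *ᵥ x) m := by
    simpa [sub_mulVec, smul_mulVec] using hx m
  have : 0 ≤ x m := by nlinarith [mul_le_mul_of_nonneg_left hPx hγ0]
  exact this.trans (hm s (Finset.mem_univ s))

theorem isUnit_one_sub_smul (hP : P ∈ rowStochastic R n) (hγ0 : 0 ≤ γ) (hγ1 : γ < 1) :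
    IsUnit (1 - γ • P) := by
  rw [← mulVec_injective_iff_isUnit]
  intro x y hxy
  have hxy' : (1 - γ • P) *ᵥ (x - y) = 0 := by rw [mulVec_sub, hxy, sub_self]
  have hyx' : (1 - γ • P) *ᵥ (y - x) = 0 := by rw [mulVec_sub, hxy, sub_self]
  have h₁ := nonneg_of_one_sub_smul_mulVec_nonneg hP hγ0 hγ1 hxy'.ge
  have h₂ := nonneg_of_one_sub_smul_mulVec_nonneg hP hγ0 hγ1 hyx'.ge
  exact le_antisymm (sub_nonneg.1 h₂) (sub_nonneg.1 h₁)

theorem inv_one_sub_smul_nonneg (hP : P ∈ rowStochastic R n) (hγ0 : 0 ≤ γ) (hγ1 : γ < 1)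
    (i j : n) : 0 ≤ (1 - γ • P)⁻¹ i j := by
  have hdet := (isUnit_iff_isUnit_det _).1 (isUnit_one_sub_smul hP hγ0 hγ1)
  have hcol : (1 - γ • P) *ᵥ ((1 - γ • P)⁻¹ *ᵥ Pi.single j 1) = Pi.single j (1 : R) := by
    rw [mulVec_mulVec, mul_nonsing_inv _ hdet, one_mulVec]
  have := nonneg_of_one_sub_smul_mulVec_nonneg hP hγ0 hγ1
    (hcol ▸ Pi.single_nonneg.2 zero_le_one) i
  rwa [mulVec_single_one] at this

end Matrix

section MDP

variable {S A : Type*} [Fintype S] [Fintype A]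

theorem bellman_le_optBellman [Nonempty A] (P : S → A → S → ℝ) (r : S → A → ℝ) (γ : ℝ)
    {π : S → A → ℝ} (hπ : IsPolicy π) (v : S → ℝ) :
    bellman P r γ π v ≤ optBellman P r γ v := by
  intro s
  set q : A → ℝ := fun a => r s a + γ * ∑ s', P s a s' * v s'
  have hq : bellman P r γ π v s = ∑ a, π s a * q a := by
    simp only [q, bellman, rPol, PPol, Pi.add_apply, Pi.smul_apply, smul_eq_mul, mulVec,
      dotProduct, of_apply, mul_add, Finset.sum_add_distrib, Finset.mul_sum, Finset.sum_mul]
    rw [Finset.sum_comm (s := Finset.univ (α := S))]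
    simp only [mul_comm, mul_left_comm]
  calc bellman P r γ π v s = ∑ a, π s a * q a := hq
    _ ≤ ∑ a, π s a * Finset.univ.sup' Finset.univ_nonempty q := by
        gcongr with a
        exacts [(hπ s).1 a, Finset.le_sup' q (Finset.mem_univ a)]
    _ = optBellman P r γ v s := by rw [← Finset.sum_mul, (hπ s).2, one_mul]; rfl

variable [DecidableEq S]

theorem PPol_mem_rowStochastic {P : S → A → S → ℝ} (hP : IsKernel P) {π : S → A → ℝ}
    (hπ : IsPolicy π) : PPol P π ∈ rowStochastic ℝ S := by
  refine mem_rowStochastic_iff_sum.2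
    ⟨fun s s' => Finset.sum_nonneg fun a _ => mul_nonneg ((hπ s).1 a) ((hP s a).1 s'), fun s => ?_⟩
  simp only [PPol, of_apply]
  rw [Finset.sum_comm]
  simp only [← Finset.mul_sum, (hP s _).2, mul_one, (hπ s).2]

theorem occ_nonneg {P : S → A → S → ℝ} {γ : ℝ} {μ : S → ℝ} {π : S → A → ℝ}
    (hM : PPol P π ∈ rowStochastic ℝ S) (hγ0 : 0 ≤ γ) (hγ1 : γ < 1) (hμ : 0 ≤ μ) :
    0 ≤ occ P γ μ π := fun s =>
  mul_nonneg (sub_nonneg.2 hγ1.le) <|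
    Finset.sum_nonneg fun t _ => mul_nonneg (hμ t) (inv_one_sub_smul_nonneg hM hγ0 hγ1 t s)

theorem performance_difference (P : S → A → S → ℝ) (r : S → A → ℝ) {γ : ℝ} (μ : S → ℝ)
    (π : S → A → ℝ) (v : S → ℝ) (hU : IsUnit (1 - γ • PPol P π)) (hγ : γ ≠ 1) :
    μ ⬝ᵥ (valueFn P r γ π - v)
      = (1 - γ)⁻¹ * (occ P γ μ π ⬝ᵥ (bellman P r γ π v - v)) := by
  set M : Matrix S S ℝ := 1 - γ • PPol P π
  have hdet := (isUnit_iff_isUnit_det M).1 hU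
  have hv : v = M⁻¹ *ᵥ (M *ᵥ v) := by rw [mulVec_mulVec, nonsing_inv_mul _ hdet, one_mulVec]
  have hdiff : valueFn P r γ π - v = M⁻¹ *ᵥ (bellman P r γ π v - v) := by
    conv_lhs => rw [hv]
    rw [valueFn, ← mulVec_sub, bellman]
    congr 1
    simp only [M, sub_mulVec, one_mulVec, smul_mulVec]
    abel
  rw [hdiff, dotProduct_mulVec, occ, smul_dotProduct, smul_eq_mul,
    inv_mul_cancel_left₀ (sub_ne_zero.2 hγ.symm)]

end MDP

theorem stmt_9_general {S A : Type*} [Fintype S] [Fintype A] [Nonempty A] [DecidableEq S]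
    (P : S → A → S → ℝ) (hP : IsKernel P) (r : S → A → ℝ) (γ : ℝ)
    (hγ0 : 0 ≤ γ) (hγ1 : γ < 1)
    (π π' : S → A → ℝ) (hπ' : IsPolicy π')
    (μ : S → ℝ) (hμ : IsDist μ) :
    μ ⬝ᵥ (valueFn P r γ π' - valueFn P r γ π)
      = (1 - γ)⁻¹ * (occ P γ μ π' ⬝ᵥ (bellman P r γ π' (valueFn P r γ π) - valueFn P r γ π))
    ∧ μ ⬝ᵥ (valueFn P r γ π' - valueFn P r γ π)
      ≤ (1 - γ)⁻¹ * (occ P γ μ π' ⬝ᵥ (optBellman P r γ (valueFn P r γ π) - valueFn P r γ π)) := by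
  have hM := PPol_mem_rowStochastic hP hπ'
  have hpd := performance_difference P r μ π' (valueFn P r γ π)
    (isUnit_one_sub_smul hM hγ0 hγ1) hγ1.ne
  refine ⟨hpd, hpd.trans_le (mul_le_mul_of_nonneg_left ?_ (inv_nonneg.2 (sub_nonneg.2 hγ1.le)))⟩
  exact dotProduct_le_dotProduct_of_nonneg_left
    (sub_le_sub_right (bellman_le_optBellman P r γ hπ' _) _) (occ_nonneg hM hγ0 hγ1 hμ.1)

/-- `μ·(v_{π'} - v_π) = (1-γ)⁻¹ d_{μ,π'}·(T_{π'}v_π - v_π)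
≤ (1-γ)⁻¹ d_{μ,π'}·(T v_π - v_π)`. -/
theorem stmt_9 {S A : Type*} [Fintype S] [Fintype A] [Nonempty S] [Nonempty A] [DecidableEq S]
    (P : S → A → S → ℝ) (hP : IsKernel P) (r : S → A → ℝ) (γ : ℝ)
    (hγ0 : 0 ≤ γ) (hγ1 : γ < 1)
    (π π' : S → A → ℝ) (hπ : IsPolicy π) (hπ' : IsPolicy π')
    (μ : S → ℝ) (hμ : IsDist μ) :
    μ ⬝ᵥ (valueFn P r γ π' - valueFn P r γ π)
      = (1 - γ)⁻¹ * (occ P γ μ π' ⬝ᵥ (bellman P r γ π' (valueFn P r γ π) - valueFn P r γ π))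
    ∧ μ ⬝ᵥ (valueFn P r γ π' - valueFn P r γ π)
      ≤ (1 - γ)⁻¹ * (occ P γ μ π' ⬝ᵥ (optBellman P r γ (valueFn P r γ π) - valueFn P r γ π)) :=
  stmt_9_general P hP r γ hγ0 hγ1 π π' hπ' μ hμ
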